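/- Let p, q, r, s be mutually orthogonal pure imaginary octonions with \(p^2 = -1\). Then \([L_r \circ L_p, L_p \circ L_q] = -2\, L_r \circ L_q\) as linear maps on the octonions. -/

import Mathlib

noncomputable section
open Quaternion

/-- The octonions, as the Cayley–Dickson double of the real quaternions. -/
@[ext] structure Oct : Type where
  x : ℍ[ℝ]
  y : ℍ[ℝ]

namespace Oct

instance : Zero Oct := ⟨⟨0, 0⟩⟩
instance : One Oct := ⟨⟨1, 0⟩⟩
instance : Add Oct := ⟨fun a b => ⟨a.x + b.x, a.y + b.y⟩⟩
instance : Neg Oct := ⟨fun a => ⟨-a.x, -a.y⟩⟩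
instance : Sub Oct := ⟨fun a b => ⟨a.x - b.x, a.y - b.y⟩⟩
instance : SMul ℝ Oct := ⟨fun r a => ⟨r • a.x, r • a.y⟩⟩
/-- Cayley–Dickson multiplication. -/
instance : Mul Oct := ⟨fun a b => ⟨a.x * b.x - star b.y * a.y, b.y * a.x + a.y * star b.x⟩⟩

@[simp] lemma zero_x : (0 : Oct).x = 0 := rfl
@[simp] lemma zero_y : (0 : Oct).y = 0 := rfl
@[simp] lemma one_x : (1 : Oct).x = 1 := rfl
@[simp] lemma one_y : (1 : Oct).y = 0 := rfl
@[simp] lemma add_x (a b : Oct) : (a + b).x = a.x + b.x := rfl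
@[simp] lemma add_y (a b : Oct) : (a + b).y = a.y + b.y := rfl
@[simp] lemma neg_x (a : Oct) : (-a).x = -a.x := rfl
@[simp] lemma neg_y (a : Oct) : (-a).y = -a.y := rfl
@[simp] lemma sub_x (a b : Oct) : (a - b).x = a.x - b.x := rfl
@[simp] lemma sub_y (a b : Oct) : (a - b).y = a.y - b.y := rfl
@[simp] lemma smul_x (r : ℝ) (a : Oct) : (r • a).x = r • a.x := rfl
@[simp] lemma smul_y (r : ℝ) (a : Oct) : (r • a).y = r • a.y := rfl
@[simp] lemma mul_x (a b : Oct) : (a * b).x = a.x * b.x - star b.y * a.y := rfl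
@[simp] lemma mul_y (a b : Oct) : (a * b).y = b.y * a.x + a.y * star b.x := rfl

instance : AddCommGroup Oct where
  add_assoc a b c := by ext <;> simp [add_assoc]
  zero_add a := by ext <;> simp
  add_zero a := by ext <;> simp
  add_comm a b := by ext <;> simp [add_comm]
  neg_add_cancel a := by ext <;> simp
  sub_eq_add_neg a b := by ext <;> simp [sub_eq_add_neg]
  nsmul := nsmulRec
  zsmul := zsmulRec

instance : Module ℝ Oct where
  one_smul a := by ext <;> simp
  mul_smul r s a := by ext <;> simp [mul_smul]
  smul_zero r := by ext <;> simp
  smul_add r a b := by ext <;> simp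
  add_smul r s a := by ext <;> simp [add_smul]
  zero_smul a := by ext <;> simp

/-- Octonion conjugation. -/
def conj (a : Oct) : Oct := ⟨star a.x, -a.y⟩

/-- Real part. -/
def re (a : Oct) : ℝ := a.x.re

/-- The inner product `⟨a,b⟩ = Re (a * conj b)`. -/
def inner (a b : Oct) : ℝ := re (a * conj b)

/-- Left multiplication. -/
def L (a : Oct) : Oct → Oct := fun v => a * v

/-- Right multiplication. -/
def R (a : Oct) : Oct → Oct := fun v => v * a

lemma mul_add' (a u v : Oct) : a * (u + v) = a * u + a * v := by
  ext <;> simp [mul_add, add_mul] <;> abel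

lemma add_mul' (a b u : Oct) : (a + b) * u = a * u + b * u := by
  ext <;> simp [mul_add, add_mul] <;> abel

lemma mul_smul' (r : ℝ) (a u : Oct) : a * (r • u) = r • (a * u) := by
  ext <;> simp [mul_smul_comm, smul_mul_assoc, smul_sub, smul_add]

lemma smul_mul' (r : ℝ) (a u : Oct) : (r • a) * u = r • (a * u) := by
  ext <;> simp [mul_smul_comm, smul_mul_assoc, smul_sub, smul_add]

/-- Left multiplication as a real-linear map. -/
def Llin (a : Oct) : Oct →ₗ[ℝ] Oct where
  toFun v := a * v
  map_add' u v := mul_add' a u v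
  map_smul' r u := mul_smul' r a u

/-- The imaginary quaternion units. -/
def qi : ℍ[ℝ] := ⟨0, 1, 0, 0⟩
def qj : ℍ[ℝ] := ⟨0, 0, 1, 0⟩
def qk : ℍ[ℝ] := ⟨0, 0, 0, 1⟩

/-- The standard imaginary basis units of the octonions. -/
def i : Oct := ⟨qi, 0⟩
def j : Oct := ⟨qj, 0⟩
def k : Oct := ⟨qk, 0⟩
def l : Oct := ⟨0, 1⟩
def il : Oct := ⟨0, qi⟩
def jl : Oct := ⟨0, qj⟩
def kl : Oct := ⟨0, qk⟩

/-- The standard basis of the octonions. -/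
def basisSet : Set Oct := {1, i, j, k, l, il, jl, kl}

/-- The imaginary standard basis units. -/
def imSet : Set Oct := {i, j, k, l, il, jl, kl}

end Oct

/-!
For pure imaginary octonions `ab + ba = -2⟨a, b⟩`, so orthogonal ones anticommute. Polarizing
left alternativity `a (a v) = (a a) v` at `a + b` gives `L_a L_b + L_b L_a = L_{ab + ba}`, hence
`L_p, L_q, L_r` pairwise anticommute and `L_p² = L_{p²} = -1`. The rest happens in the ring of
real-linear endomorphisms: three anticommutations give
`L_p L_q L_r L_p = -L_r L_p L_p L_q = L_r L_q`, while `L_r L_p L_p L_q = -L_r L_q`.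
-/

theorem mul_mul_sub_mul_mul_of_anticommute {A : Type*} [Ring A] {p q r : A}
    (hp : p * p = -1) (hpq : p * q = -(q * p)) (hpr : p * r = -(r * p))
    (hqr : q * r = -(r * q)) :
    r * p * (p * q) - p * q * (r * p) = -2 * (r * q) := by
  have hpqrp : p * q * (r * p) = r * q :=
    calc p * q * (r * p) = p * (q * r) * p := by noncomm_ring
      _ = -(p * r * (q * p)) := by rw [hqr]; noncomm_ring
      _ = -(r * p * (p * q)) := by rw [hpr, hpq]; noncomm_ring
      _ = r * q := by rw [← mul_assoc, mul_assoc r, hp]; noncomm_ring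
  rw [hpqrp, ← mul_assoc, mul_assoc r, hp]
  noncomm_ring

namespace Oct

theorem left_alternative (a v : Oct) : a * (a * v) = a * a * v := by
  ext <;>
    simp [Quaternion.re_mul, Quaternion.imI_mul, Quaternion.imJ_mul, Quaternion.imK_mul] <;>
    ring

theorem re_eq_zero_of_conj_eq_neg {a : Oct} (ha : conj a = -a) : a.re = 0 := by
  have h := congrArg (fun b : Oct => b.x.re) ha
  simp only [conj, neg_x, Quaternion.re_star] at h
  exact CharZero.eq_neg_self_iff.1 h

theorem mul_add_mul_eq_of_conj_eq_neg {a b : Oct} (ha : conj a = -a) (hb : conj b = -b) :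
    a * b + b * a = (-2 * inner a b) • 1 := by
  have ha' := re_eq_zero_of_conj_eq_neg ha
  have hb' := re_eq_zero_of_conj_eq_neg hb
  unfold re at ha' hb'
  ext <;>
    simp [inner, re, conj, Quaternion.re_mul, Quaternion.imI_mul, Quaternion.imJ_mul,
      Quaternion.imK_mul, ha', hb'] <;>
    ring

theorem mul_add_mul_eq_zero_of_inner_eq_zero {a b : Oct} (ha : conj a = -a)
    (hb : conj b = -b) (hab : inner a b = 0) : a * b + b * a = 0 := by
  rw [mul_add_mul_eq_of_conj_eq_neg ha hb, hab, mul_zero, zero_smul]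

theorem Llin_add (a b : Oct) : Llin (a + b) = Llin a + Llin b :=
  LinearMap.ext fun v => add_mul' a b v

theorem Llin_zero : Llin 0 = 0 := by
  ext v <;> simp [Llin]

theorem Llin_neg_one : Llin (-1) = -1 := by
  ext v <;> simp [Llin]

theorem Llin_mul_self (a : Oct) : Llin (a * a) = Llin a * Llin a :=
  LinearMap.ext fun v => (left_alternative a v).symm

theorem Llin_mul_add_mul (a b : Oct) :
    Llin a * Llin b + Llin b * Llin a = Llin (a * b + b * a) := by
  have h := Llin_mul_self (a + b)
  simp only [Llin_add, mul_add', add_mul', Llin_mul_self, add_mul, mul_add] at h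
  rw [Llin_add]
  linear_combination (norm := abel) -h

theorem Llin_mul_eq_neg_of_inner_eq_zero {a b : Oct} (ha : conj a = -a) (hb : conj b = -b)
    (hab : inner a b = 0) : Llin a * Llin b = -(Llin b * Llin a) := by
  rw [eq_neg_iff_add_eq_zero, Llin_mul_add_mul, mul_add_mul_eq_zero_of_inner_eq_zero ha hb hab,
    Llin_zero]

end Oct

theorem comm_LrLp_LpLq_general (p q r : Oct)
    (hp : Oct.conj p = -p) (hq : Oct.conj q = -q) (hr : Oct.conj r = -r)
    (hpq : Oct.inner p q = 0) (hpr : Oct.inner p r = 0)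
    (hqr : Oct.inner q r = 0)
    (hp2 : p * p = -1) :
    (Oct.L r ∘ Oct.L p) ∘ (Oct.L p ∘ Oct.L q)
        - (Oct.L p ∘ Oct.L q) ∘ (Oct.L r ∘ Oct.L p)
      = (-2 : ℝ) • (Oct.L r ∘ Oct.L q) := by
  have hLp : Oct.Llin p * Oct.Llin p = -1 := by rw [← Oct.Llin_mul_self, hp2, Oct.Llin_neg_one]
  have hEnd := mul_mul_sub_mul_mul_of_anticommute hLp
    (Oct.Llin_mul_eq_neg_of_inner_eq_zero hp hq hpq)
    (Oct.Llin_mul_eq_neg_of_inner_eq_zero hp hr hpr)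
    (Oct.Llin_mul_eq_neg_of_inner_eq_zero hq hr hqr)
  funext v
  simpa [Oct.Llin, Oct.L, ofNat_smul_eq_nsmul] using LinearMap.congr_fun hEnd v

/-- For mutually orthogonal pure imaginary octonions `p, q, r, s` with `p² = -1`,
`[L r ∘ L p, L p ∘ L q] = -2 (L r ∘ L q)`. -/
theorem comm_LrLp_LpLq (p q r s : Oct)
    (hp : Oct.conj p = -p) (hq : Oct.conj q = -q) (hr : Oct.conj r = -r)
    (hs : Oct.conj s = -s)
    (hpq : Oct.inner p q = 0) (hpr : Oct.inner p r = 0) (hps : Oct.inner p s = 0)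
    (hqr : Oct.inner q r = 0) (hqs : Oct.inner q s = 0) (hrs : Oct.inner r s = 0)
    (hp2 : p * p = -1) :
    (Oct.L r ∘ Oct.L p) ∘ (Oct.L p ∘ Oct.L q)
        - (Oct.L p ∘ Oct.L q) ∘ (Oct.L r ∘ Oct.L p)
      = (-2 : ℝ) • (Oct.L r ∘ Oct.L q) :=
  comm_LrLp_LpLq_general p q r hp hq hr hpq hpr hqr hp2
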